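/- arXiv:2101.05239 — 3 statements merged into one kernel-verified Lean document; each statement's English description precedes it below -/
import Mathlib

section
/- For vectors w, v ∈ ℝᵈ and scalars b, c ∈ ℝ, the convolution of x ↦ sin(wᵀx + b)·sin(vᵀx + c) with the density of N(0, σ²I_d) equals x ↦ (1/2)·exp(-σ²‖w - v‖²/2)·cos((w - v)ᵀx + b - c) - (1/2)·exp(-σ²‖w + v‖²/2)·cos((w + v)ᵀx + b + c). -/
/-!
By the product-to-sum formula the integrand is a difference of two terms
`cos (θ - ⟪u, y⟫) · p(y)` with affine phases. Each is the real part of `e^{iθ} e^{-i⟪u, y⟫} p(y)`,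
and the integral of `e^{-i⟪u, y⟫} p(y)` is the Gaussian characteristic function
`exp (-σ² ‖u‖² / 2)`, a complex Gaussian integral `∫ exp (-β ‖y‖² + ⟪γ, y⟫)` with `β = 1 / (2σ²)`.
-/

open MeasureTheory Real

/-- Density of the centered isotropic Gaussian `N(0, σ²I_d)` on `ℝᵈ`. -/
noncomputable def gaussDensity (d : ℕ) (σ : ℝ) (y : Fin d → ℝ) : ℝ :=
  (2 * Real.pi * σ ^ 2) ^ (-(d : ℝ) / 2) * Real.exp (-(∑ i, y i ^ 2) / (2 * σ ^ 2))

open Complex GaussianFourier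

section GaussianCharFun

variable {d : ℕ}

lemma cexp_neg_I_mul_gaussDensity (σ : ℝ) (u y : Fin d → ℝ) :
    cexp (-I * ∑ i, u i * y i) * gaussDensity d σ y
      = ((2 * π * σ ^ 2) ^ (-(d : ℝ) / 2) : ℝ) *
        cexp (-(1 / (2 * σ ^ 2)) * ∑ i, (y i : ℂ) ^ 2 + ∑ i, -I * u i * y i) := by
  have hlin : ∑ i, -I * u i * y i = -I * ∑ i, (u i * y i : ℝ) := by
    push_cast
    simp only [Finset.mul_sum, mul_assoc]
  rw [hlin, Complex.exp_add, gaussDensity, ofReal_mul, ofReal_exp]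
  push_cast
  ring_nf

variable {σ : ℝ}

lemma integrable_cexp_neg_I_mul_gaussDensity (hσ : σ ≠ 0) (u : Fin d → ℝ) :
    Integrable fun y : Fin d → ℝ => cexp (-I * ∑ i, u i * y i) * gaussDensity d σ y := by
  simp only [cexp_neg_I_mul_gaussDensity]
  refine (integrable_cexp_neg_mul_sum_add ?_ _).const_mul _
  norm_cast
  positivity

lemma integral_cexp_neg_I_mul_gaussDensity (hσ : σ ≠ 0) (u : Fin d → ℝ) :
    ∫ y : Fin d → ℝ, cexp (-I * ∑ i, u i * y i) * gaussDensity d σ y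
      = rexp (-(σ ^ 2) * (∑ i, u i ^ 2) / 2) := by
  have hβ : 0 < (1 / (2 * σ ^ 2) : ℂ).re := by
    norm_cast
    positivity
  have hvar : (0 : ℝ) < 2 * π * σ ^ 2 := by positivity
  have hscale : (π : ℂ) / (1 / (2 * σ ^ 2)) = ((2 * π * σ ^ 2 : ℝ) : ℂ) := by
    push_cast
    field_simp
  have hpow : ((2 * π * σ ^ 2 : ℝ) : ℂ) ^ ((d : ℂ) / 2)
      = ((2 * π * σ ^ 2) ^ ((d : ℝ) / 2) : ℝ) := by
    rw [ofReal_cpow hvar.le]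
    push_cast
    rfl
  have hexp : (∑ i, (-I * u i) ^ 2) / (4 * (1 / (2 * σ ^ 2)))
      = ((-(σ ^ 2) * (∑ i, u i ^ 2) / 2 : ℝ) : ℂ) := by
    have : (σ : ℂ) ≠ 0 := by exact_mod_cast hσ
    push_cast
    simp only [mul_pow, neg_sq, I_sq, neg_one_mul, Finset.sum_neg_distrib]
    field_simp
    ring
  simp only [cexp_neg_I_mul_gaussDensity]
  rw [integral_const_mul, integral_cexp_neg_mul_sum_add hβ, Fintype.card_fin, hscale, hpow, hexp,
    ← ofReal_exp, ← mul_assoc, ← ofReal_mul, ← rpow_add hvar, neg_div, neg_add_cancel, rpow_zero,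
    ofReal_one, one_mul]

lemma cos_sub_mul_gaussDensity_eq_re (θ : ℝ) (u y : Fin d → ℝ) :
    Real.cos (θ - ∑ i, u i * y i) * gaussDensity d σ y
      = (cexp (θ * I) * (cexp (-I * ∑ i, u i * y i) * gaussDensity d σ y)).re := by
  have hphase : (θ : ℂ) * I + -I * ((∑ i, u i * y i : ℝ) : ℂ)
      = ((θ - ∑ i, u i * y i : ℝ) : ℂ) * I := by
    push_cast
    ring
  rw [← mul_assoc, ← Complex.exp_add, hphase, re_mul_ofReal, exp_ofReal_mul_I_re]

lemma integrable_cos_sub_mul_gaussDensity (hσ : σ ≠ 0) (θ : ℝ) (u : Fin d → ℝ) :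
    Integrable fun y : Fin d → ℝ => Real.cos (θ - ∑ i, u i * y i) * gaussDensity d σ y := by
  simp_rw [cos_sub_mul_gaussDensity_eq_re]
  exact ((integrable_cexp_neg_I_mul_gaussDensity hσ u).const_mul _).re

lemma integral_cos_sub_mul_gaussDensity (hσ : σ ≠ 0) (θ : ℝ) (u : Fin d → ℝ) :
    ∫ y : Fin d → ℝ, Real.cos (θ - ∑ i, u i * y i) * gaussDensity d σ y
      = rexp (-(σ ^ 2) * (∑ i, u i ^ 2) / 2) * Real.cos θ := by
  simp_rw [cos_sub_mul_gaussDensity_eq_re, ← RCLike.re_to_complex]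
  rw [integral_re ((integrable_cexp_neg_I_mul_gaussDensity hσ u).const_mul _),
    RCLike.re_to_complex, integral_const_mul, integral_cexp_neg_I_mul_gaussDensity hσ,
    re_mul_ofReal, exp_ofReal_mul_I_re, mul_comm]

end GaussianCharFun

lemma sin_mul_sin_mul_eq (A B p : ℝ) :
    Real.sin A * Real.sin B * p
      = 1 / 2 * (Real.cos (A - B) * p) - 1 / 2 * (Real.cos (A + B) * p) := by
  linear_combination p / 2 * Real.two_mul_sin_mul_sin A B

section AffinePhase

variable {ι : Type*} [Fintype ι] (w v x y : ι → ℝ) (b c : ℝ)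

lemma sum_mul_sub_add_sub_sum_mul_sub_add :
    (∑ i, w i * (x i - y i)) + b - ((∑ i, v i * (x i - y i)) + c)
      = (∑ i, (w i - v i) * x i) + b - c - ∑ i, (w i - v i) * y i := by
  simp only [mul_sub, sub_mul, Finset.sum_sub_distrib]
  ring

lemma sum_mul_sub_add_add_sum_mul_sub_add :
    (∑ i, w i * (x i - y i)) + b + ((∑ i, v i * (x i - y i)) + c)
      = (∑ i, (w i + v i) * x i) + b + c - ∑ i, (w i + v i) * y i := by
  simp only [mul_sub, add_mul, Finset.sum_sub_distrib, Finset.sum_add_distrib]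
  ring

end AffinePhase

/-- Convolution of `x ↦ sin(wᵀx + b)·sin(vᵀx + c)` with the density of `N(0, σ²I_d)`. -/
theorem sin_mul_sin_conv_gaussian (d : ℕ) (w v : Fin d → ℝ) (b c : ℝ) (σ : ℝ) (hσ : 0 < σ)
    (x : Fin d → ℝ) :
    ∫ y : Fin d → ℝ,
        (Real.sin ((∑ i, w i * (x i - y i)) + b) *
          Real.sin ((∑ i, v i * (x i - y i)) + c)) * gaussDensity d σ y
      = (1 / 2) * Real.exp (-(σ ^ 2) * (∑ i, (w i - v i) ^ 2) / 2) *
          Real.cos ((∑ i, (w i - v i) * x i) + b - c)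
        - (1 / 2) * Real.exp (-(σ ^ 2) * (∑ i, (w i + v i) ^ 2) / 2) *
          Real.cos ((∑ i, (w i + v i) * x i) + b + c) := by
  have hσ₀ : σ ≠ 0 := hσ.ne'
  simp_rw [sin_mul_sin_mul_eq, sum_mul_sub_add_sub_sum_mul_sub_add,
    sum_mul_sub_add_add_sum_mul_sub_add]
  rw [integral_sub ((integrable_cos_sub_mul_gaussDensity hσ₀ _ _).const_mul _)
      ((integrable_cos_sub_mul_gaussDensity hσ₀ _ _).const_mul _),
    integral_const_mul, integral_const_mul, integral_cos_sub_mul_gaussDensity hσ₀,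
    integral_cos_sub_mul_gaussDensity hσ₀]
  ring
end

section
/- For w ∈ ℝᵈ and a positive definite matrix Σ, the convolution of x ↦ wᵀΣ⁻¹(x - μ)·sin(wᵀx) with the density of N(0, σ²I_d) equals x ↦ exp(-σ²‖w‖²/2)·wᵀΣ⁻¹[(x - μ)·sin(wᵀx) + σ²·w·cos(wᵀx)]. -/
open MeasureTheory Real Matrix

/-!
The Gaussian density is a product of one-dimensional densities `gaussianPDFReal 0 σ²`, so
integrals of `e^{-i⟨w,y⟩}` and `y_k e^{-i⟨w,y⟩}` against it factor into one-dimensional ones.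
These are the complex moment generating function `E[e^{zX}] = e^{σ²z²/2}` of `X ~ N(0, σ²)` and its
derivative `E[X e^{zX}] = σ²z e^{σ²z²/2}`, taken at `z = -i w_j`. Writing the integrand as the
imaginary part of `(a - ⟨b,y⟩) e^{i(θ - ⟨w,y⟩)}`, with `a = wᵀΣ⁻¹(x - μ)`, `b = Σ⁻ᵀw` and
`θ = ⟨w,x⟩`, the theorem follows by linearity.
-/

open ProbabilityTheory Complex
open scoped NNReal

section OneDim

variable {m : ℝ} {v : ℝ≥0}

lemma integrable_gaussianReal_iff {E : Type*} [NormedAddCommGroup E] [NormedSpace ℝ E]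
    (hv : v ≠ 0) {f : ℝ → E} :
    Integrable f (gaussianReal m v) ↔ Integrable fun x ↦ gaussianPDFReal m v x • f x := by
  rw [gaussianReal_of_var_ne_zero _ hv, integrable_withDensity_iff_integrable_smul'
    (measurable_gaussianPDF _ _) (ae_of_all _ fun _ ↦ gaussianPDF_lt_top)]
  simp only [toReal_gaussianPDF]

lemma integrable_pow_mul_cexp_gaussianReal (n : ℕ) (z : ℂ) :
    Integrable (fun x : ℝ ↦ x ^ n * cexp (z * x)) (gaussianReal m v) :=
  integrable_pow_mul_cexp_of_re_mem_interior_integrableExpSet (X := id)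
    (by simp [integrableExpSet_id_gaussianReal]) n

lemma integral_id_mul_cexp_gaussianReal (z : ℂ) :
    ∫ x, x * cexp (z * x) ∂gaussianReal m v = (m + v * z) * cexp (z * m + v * z ^ 2 / 2) := by
  have hmgf := hasDerivAt_complexMGF (X := id) (μ := gaussianReal m v) (z := z)
    (by simp [integrableExpSet_id_gaussianReal])
  have hexp : HasDerivAt (fun z : ℂ ↦ cexp (z * m + v * z ^ 2 / 2))
      ((m + v * z) * cexp (z * m + v * z ^ 2 / 2)) z := by
    have hpoly : HasDerivAt (fun z : ℂ ↦ z * m + v * z ^ 2 / 2) (m + v * z) z :=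
      (((hasDerivAt_id z).mul_const (m : ℂ)).add
        (((hasDerivAt_pow 2 z).const_mul (v : ℂ)).div_const 2)).congr_deriv (by simp; ring)
    exact hpoly.cexp.congr_deriv (mul_comm _ _)
  rw [funext complexMGF_id_gaussianReal] at hmgf
  exact hmgf.unique hexp

lemma integrable_gaussianPDFReal_mul_cexp (hv : v ≠ 0) (z : ℂ) :
    Integrable fun x : ℝ ↦ (gaussianPDFReal m v x : ℂ) * cexp (z * x) := by
  simpa [integrable_gaussianReal_iff hv, Complex.real_smul] using
    integrable_pow_mul_cexp_gaussianReal (m := m) (v := v) 0 z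

lemma integrable_id_mul_gaussianPDFReal_mul_cexp (hv : v ≠ 0) (z : ℂ) :
    Integrable fun x : ℝ ↦ (x : ℂ) * ((gaussianPDFReal m v x : ℂ) * cexp (z * x)) := by
  have := (integrable_gaussianReal_iff hv).1 (integrable_pow_mul_cexp_gaussianReal (m := m) 1 z)
  simp only [pow_one, Complex.real_smul] at this
  exact this.congr (ae_of_all _ fun x ↦ by ring)

lemma integral_gaussianPDFReal_mul_cexp (hv : v ≠ 0) (z : ℂ) :
    ∫ x : ℝ, (gaussianPDFReal m v x : ℂ) * cexp (z * x) = cexp (z * m + v * z ^ 2 / 2) := by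
  simp_rw [← complexMGF_id_gaussianReal, complexMGF, integral_gaussianReal_eq_integral_smul hv,
    Complex.real_smul, id]

lemma integral_id_mul_gaussianPDFReal_mul_cexp (hv : v ≠ 0) (z : ℂ) :
    ∫ x : ℝ, (x : ℂ) * ((gaussianPDFReal m v x : ℂ) * cexp (z * x))
      = (m + v * z) * cexp (z * m + v * z ^ 2 / 2) := by
  rw [← integral_id_mul_cexp_gaussianReal, integral_gaussianReal_eq_integral_smul hv]
  simp_rw [Complex.real_smul, mul_left_comm]

end OneDim

section FintypeProd

variable {ι : Type*} [Fintype ι]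

lemma ofReal_dotProduct_mul (b y : ι → ℝ) (c : ℂ) :
    ((b ⬝ᵥ y : ℝ) : ℂ) * c = ∑ k, (b k : ℂ) * ((y k : ℂ) * c) := by
  simp only [dotProduct, ofReal_sum, ofReal_mul, Finset.sum_mul, mul_assoc]

variable [DecidableEq ι]

lemma coord_mul_prod_eq_prod_update (f : ι → ℝ → ℂ) (k : ι) (y : ι → ℝ) :
    (y k : ℂ) * ∏ j, f j (y j) = ∏ j, Function.update f k (fun u ↦ u * f k u) j (y j) := by
  rw [← Finset.mul_prod_erase _ _ (Finset.mem_univ k),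
    ← Finset.mul_prod_erase _ _ (Finset.mem_univ k), Function.update_self, mul_assoc]
  congr 2
  refine Finset.prod_congr rfl fun j hj ↦ ?_
  rw [Function.update_of_ne (Finset.ne_of_mem_erase hj)]

lemma integrable_coord_mul_fintype_prod {f : ι → ℝ → ℂ} (hf : ∀ j, Integrable (f j)) {k : ι}
    (hk : Integrable fun u : ℝ ↦ (u : ℂ) * f k u) :
    Integrable fun y : ι → ℝ ↦ (y k : ℂ) * ∏ j, f j (y j) := by
  simp_rw [coord_mul_prod_eq_prod_update]
  refine Integrable.fintype_prod fun j ↦ ?_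
  rcases eq_or_ne j k with rfl | hj
  · simpa using hk
  · simpa [hj] using hf j

lemma integral_coord_mul_fintype_prod (f : ι → ℝ → ℂ) (k : ι) :
    ∫ y : ι → ℝ, (y k : ℂ) * ∏ j, f j (y j)
      = (∫ u : ℝ, (u : ℂ) * f k u) * ∏ j ∈ Finset.univ.erase k, ∫ u, f j u := by
  simp_rw [coord_mul_prod_eq_prod_update, integral_fintype_prod_volume_eq_prod,
    ← Finset.mul_prod_erase _ _ (Finset.mem_univ k), Function.update_self]
  congr 1
  refine Finset.prod_congr rfl fun j hj ↦ ?_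
  rw [Function.update_of_ne (Finset.ne_of_mem_erase hj)]

end FintypeProd

section GaussDensity

variable {d : ℕ} {σ : ℝ} {v : ℝ≥0}

lemma gaussDensity_eq_prod (hv : (v : ℝ) = σ ^ 2) (y : Fin d → ℝ) :
    gaussDensity d σ y = ∏ i, gaussianPDFReal 0 v (y i) := by
  have hconst : (2 * π * σ ^ 2) ^ (-(d : ℝ) / 2) = (√(2 * π * v))⁻¹ ^ d := by
    rw [hv, sqrt_eq_rpow, ← rpow_neg (by positivity), ← rpow_mul_natCast (by positivity)]
    ring_nf
  rw [gaussDensity, hconst]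
  simp only [gaussianPDFReal_def, Finset.prod_mul_distrib, Finset.prod_const, Finset.card_univ,
    Fintype.card_fin, ← Real.exp_sum, hv, sub_zero, neg_div, Finset.sum_neg_distrib,
    Finset.sum_div]

lemma gaussDensity_mul_cexp_eq_prod (hv : (v : ℝ) = σ ^ 2) (w y : Fin d → ℝ) :
    (gaussDensity d σ y : ℂ) * cexp (-(w ⬝ᵥ y : ℝ) * I)
      = ∏ j, (gaussianPDFReal 0 v (y j) : ℂ) * cexp (-w j * I * y j) := by
  rw [Finset.prod_mul_distrib, ← Complex.exp_sum, gaussDensity_eq_prod hv, ofReal_prod]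
  congr 2
  simp only [dotProduct, ofReal_sum, ofReal_mul, Finset.sum_mul, ← Finset.sum_neg_distrib]
  exact Finset.sum_congr rfl fun j _ ↦ by ring

lemma prod_cexp_variance_mul_sq (w : Fin d → ℝ) :
    ∏ j, cexp ((σ : ℂ) ^ 2 * (-w j * I) ^ 2 / 2) = rexp (-σ ^ 2 * (w ⬝ᵥ w) / 2) := by
  rw [← Complex.exp_sum, ofReal_exp]
  congr 1
  simp only [dotProduct, mul_pow, neg_sq, I_sq, ofReal_div, ofReal_mul, ofReal_neg, ofReal_pow,
    ofReal_sum, ofReal_ofNat, Finset.mul_sum, Finset.sum_div]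
  exact Finset.sum_congr rfl fun j _ ↦ by ring

variable (hσ : σ ≠ 0)
include hσ

lemma integrable_gaussDensity_mul_cexp (w : Fin d → ℝ) :
    Integrable fun y : Fin d → ℝ ↦ (gaussDensity d σ y : ℂ) * cexp (-(w ⬝ᵥ y : ℝ) * I) := by
  have hv0 : (σ ^ 2).toNNReal ≠ 0 := by simpa [sq_nonneg] using hσ
  simp_rw [gaussDensity_mul_cexp_eq_prod (Real.coe_toNNReal _ (sq_nonneg σ))]
  exact Integrable.fintype_prod fun j ↦ integrable_gaussianPDFReal_mul_cexp hv0 _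

lemma integrable_coord_mul_gaussDensity_mul_cexp (w : Fin d → ℝ) (k : Fin d) :
    Integrable fun y : Fin d → ℝ ↦
      (y k : ℂ) * ((gaussDensity d σ y : ℂ) * cexp (-(w ⬝ᵥ y : ℝ) * I)) := by
  have hv0 : (σ ^ 2).toNNReal ≠ 0 := by simpa [sq_nonneg] using hσ
  simp_rw [gaussDensity_mul_cexp_eq_prod (Real.coe_toNNReal _ (sq_nonneg σ))]
  exact integrable_coord_mul_fintype_prod
    (fun j ↦ integrable_gaussianPDFReal_mul_cexp hv0 _)
    (integrable_id_mul_gaussianPDFReal_mul_cexp hv0 _)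

lemma integrable_dotProduct_mul_gaussDensity_mul_cexp (b w : Fin d → ℝ) :
    Integrable fun y : Fin d → ℝ ↦
      ((b ⬝ᵥ y : ℝ) : ℂ) * ((gaussDensity d σ y : ℂ) * cexp (-(w ⬝ᵥ y : ℝ) * I)) := by
  simp_rw [ofReal_dotProduct_mul]
  refine integrable_finsetSum _ fun k _ ↦ ?_
  exact (integrable_coord_mul_gaussDensity_mul_cexp hσ w k).const_mul (b k : ℂ)

lemma integral_gaussDensity_mul_cexp (w : Fin d → ℝ) :
    ∫ y : Fin d → ℝ, (gaussDensity d σ y : ℂ) * cexp (-(w ⬝ᵥ y : ℝ) * I)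
      = rexp (-σ ^ 2 * (w ⬝ᵥ w) / 2) := by
  have hv0 : (σ ^ 2).toNNReal ≠ 0 := by simpa [sq_nonneg] using hσ
  simp_rw [gaussDensity_mul_cexp_eq_prod (Real.coe_toNNReal _ (sq_nonneg σ))]
  rw [integral_fintype_prod_volume_eq_prod
    (fun j u ↦ (gaussianPDFReal 0 (σ ^ 2).toNNReal u : ℂ) * cexp (-w j * I * u))]
  simp only [integral_gaussianPDFReal_mul_cexp hv0, Real.coe_toNNReal _ (sq_nonneg σ), ofReal_zero,
    mul_zero, zero_add, ofReal_pow]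
  exact prod_cexp_variance_mul_sq w

lemma integral_coord_mul_gaussDensity_mul_cexp (w : Fin d → ℝ) (k : Fin d) :
    ∫ y : Fin d → ℝ, (y k : ℂ) * ((gaussDensity d σ y : ℂ) * cexp (-(w ⬝ᵥ y : ℝ) * I))
      = -(σ ^ 2 * w k) * I * rexp (-σ ^ 2 * (w ⬝ᵥ w) / 2) := by
  have hv0 : (σ ^ 2).toNNReal ≠ 0 := by simpa [sq_nonneg] using hσ
  simp_rw [gaussDensity_mul_cexp_eq_prod (Real.coe_toNNReal _ (sq_nonneg σ))]
  rw [integral_coord_mul_fintype_prod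
    (fun j u ↦ (gaussianPDFReal 0 (σ ^ 2).toNNReal u : ℂ) * cexp (-w j * I * u))]
  simp only [integral_gaussianPDFReal_mul_cexp hv0, integral_id_mul_gaussianPDFReal_mul_cexp hv0,
    Real.coe_toNNReal _ (sq_nonneg σ), ofReal_zero, mul_zero, zero_add, ofReal_pow]
  rw [mul_assoc, Finset.mul_prod_erase _ (fun j ↦ cexp ((σ : ℂ) ^ 2 * (-w j * I) ^ 2 / 2))
    (Finset.mem_univ k), prod_cexp_variance_mul_sq w]
  ring

lemma integral_dotProduct_mul_gaussDensity_mul_cexp (b w : Fin d → ℝ) :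
    ∫ y : Fin d → ℝ, ((b ⬝ᵥ y : ℝ) : ℂ) * ((gaussDensity d σ y : ℂ) * cexp (-(w ⬝ᵥ y : ℝ) * I))
      = -(σ ^ 2 * (b ⬝ᵥ w)) * I * rexp (-σ ^ 2 * (w ⬝ᵥ w) / 2) := by
  simp_rw [ofReal_dotProduct_mul]
  rw [integral_finsetSum _ fun k _ ↦
    (integrable_coord_mul_gaussDensity_mul_cexp hσ w k).const_mul _]
  simp_rw [integral_const_mul, integral_coord_mul_gaussDensity_mul_cexp hσ]
  simp only [dotProduct, ofReal_sum, ofReal_mul, Finset.mul_sum, Finset.sum_mul,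
    ← Finset.sum_neg_distrib]
  exact Finset.sum_congr rfl fun k _ ↦ by ring

end GaussDensity

lemma im_cexp_mul_I_mul (θ p q : ℝ) :
    (cexp (θ * I) * (p + q * I)).im = p * Real.sin θ + q * Real.cos θ := by
  simp only [mul_im, add_re, add_im, ofReal_re, ofReal_im, mul_re, I_re, I_im,
    exp_ofReal_mul_I_re, exp_ofReal_mul_I_im]
  ring

lemma im_cexp_mul_I_mul_cexp_neg_mul_I (θ s r : ℝ) :
    (cexp (θ * I) * (r * cexp (-s * I))).im = r * Real.sin (θ - s) := by
  rw [mul_left_comm, ← Complex.exp_add,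
    show (θ : ℂ) * I + -s * I = (θ - s : ℝ) * I by push_cast; ring, im_ofReal_mul,
    exp_ofReal_mul_I_im]

lemma integral_affine_mul_sin_mul_gaussDensity {d : ℕ} {σ : ℝ} (hσ : σ ≠ 0) (a θ : ℝ)
    (b w : Fin d → ℝ) :
    ∫ y : Fin d → ℝ, (a - b ⬝ᵥ y) * Real.sin (θ - w ⬝ᵥ y) * gaussDensity d σ y
      = rexp (-σ ^ 2 * (w ⬝ᵥ w) / 2) * (a * Real.sin θ + σ ^ 2 * (b ⬝ᵥ w) * Real.cos θ) := by
  have hΦ := integrable_gaussDensity_mul_cexp hσ w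
  have hbΦ := integrable_dotProduct_mul_gaussDensity_mul_cexp hσ b w
  set Φ : (Fin d → ℝ) → ℂ := fun y ↦ (gaussDensity d σ y : ℂ) * cexp (-(w ⬝ᵥ y : ℝ) * I)
  have hpoint (y : Fin d → ℝ) : (a - b ⬝ᵥ y) * Real.sin (θ - w ⬝ᵥ y) * gaussDensity d σ y
      = (cexp (θ * I) * (a * Φ y - (b ⬝ᵥ y : ℝ) * Φ y)).im := by
    have hΦy : (a : ℂ) * Φ y - (b ⬝ᵥ y : ℝ) * Φ y
        = ((a - b ⬝ᵥ y) * gaussDensity d σ y : ℝ) * cexp (-(w ⬝ᵥ y : ℝ) * I) := by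
      simp only [Φ]
      push_cast
      ring
    rw [hΦy, im_cexp_mul_I_mul_cexp_neg_mul_I]
    ring
  have hint : Integrable fun y ↦ cexp (θ * I) * (a * Φ y - (b ⬝ᵥ y : ℝ) * Φ y) :=
    ((hΦ.const_mul _).sub hbΦ).const_mul _
  simp_rw [hpoint]
  rw [show ∫ y, (cexp (θ * I) * (a * Φ y - (b ⬝ᵥ y : ℝ) * Φ y)).im
      = (∫ y, cexp (θ * I) * (a * Φ y - (b ⬝ᵥ y : ℝ) * Φ y)).im from integral_im hint,
    integral_const_mul, integral_sub (hΦ.const_mul _) hbΦ, integral_const_mul,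
    integral_gaussDensity_mul_cexp hσ, integral_dotProduct_mul_gaussDensity_mul_cexp hσ]
  set E := rexp (-σ ^ 2 * (w ⬝ᵥ w) / 2)
  rw [show cexp (θ * I) * (a * E - -(σ ^ 2 * (b ⬝ᵥ w : ℝ)) * I * E)
      = E * (cexp (θ * I) * (a + (σ ^ 2 * (b ⬝ᵥ w) : ℝ) * I)) by push_cast; ring,
    im_ofReal_mul, im_cexp_mul_I_mul]

theorem linear_sin_conv_gaussian_general (d : ℕ) (w μ : Fin d → ℝ)
    (S : Matrix (Fin d) (Fin d) ℝ) (σ : ℝ) (hσ : 0 < σ) (x : Fin d → ℝ) :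
    ∫ y : Fin d → ℝ,
        ((∑ i, w i * (S⁻¹.mulVec (fun k => (x k - y k) - μ k)) i) *
          Real.sin (∑ k, w k * (x k - y k))) * gaussDensity d σ y
      = Real.exp (-(σ ^ 2) * (∑ i, w i ^ 2) / 2) *
          (∑ i, w i * (S⁻¹.mulVec
            (fun k => (x k - μ k) * Real.sin (∑ j, w j * x j)
              + σ ^ 2 * w k * Real.cos (∑ j, w j * x j))) i) := by
  have hθ : ∑ j, w j * x j = w ⬝ᵥ x := rfl
  have hnorm : ∑ i, w i ^ 2 = w ⬝ᵥ w := by simp only [dotProduct, sq]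
  have hlin (y : Fin d → ℝ) : ∑ i, w i * (S⁻¹ *ᵥ fun k ↦ (x k - y k) - μ k) i
      = (w ᵥ* S⁻¹) ⬝ᵥ (x - μ) - (w ᵥ* S⁻¹) ⬝ᵥ y := by
    change w ⬝ᵥ S⁻¹ *ᵥ (x - y - μ) = _
    rw [dotProduct_mulVec, sub_right_comm, dotProduct_sub]
  have hphase (y : Fin d → ℝ) : ∑ k, w k * (x k - y k) = w ⬝ᵥ x - w ⬝ᵥ y := by
    simp only [dotProduct, mul_sub, Finset.sum_sub_distrib]
  have hrhs (s c : ℝ) : ∑ i, w i * (S⁻¹ *ᵥ fun k ↦ (x k - μ k) * s + σ ^ 2 * w k * c) i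
      = (w ᵥ* S⁻¹) ⬝ᵥ (x - μ) * s + σ ^ 2 * ((w ᵥ* S⁻¹) ⬝ᵥ w) * c := by
    rw [show (fun k ↦ (x k - μ k) * s + σ ^ 2 * w k * c) = s • (x - μ) + (σ ^ 2 * c) • w by
      ext k; simp only [Pi.add_apply, Pi.smul_apply, Pi.sub_apply, smul_eq_mul]; ring]
    change w ⬝ᵥ S⁻¹ *ᵥ _ = _
    rw [dotProduct_mulVec, dotProduct_add, dotProduct_smul, dotProduct_smul, smul_eq_mul,
      smul_eq_mul]
    ring
  simp_rw [hθ, hnorm, hlin, hphase, hrhs]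
  exact integral_affine_mul_sin_mul_gaussDensity hσ.ne' _ _ _ _

/-- Convolution of `x ↦ wᵀΣ⁻¹(x - μ)·sin(wᵀx)` with the density of `N(0, σ²I_d)`. -/
theorem linear_sin_conv_gaussian (d : ℕ) (w μ : Fin d → ℝ)
    (S : Matrix (Fin d) (Fin d) ℝ) (hS : S.PosDef) (σ : ℝ) (hσ : 0 < σ) (x : Fin d → ℝ) :
    ∫ y : Fin d → ℝ,
        ((∑ i, w i * (S⁻¹.mulVec (fun k => (x k - y k) - μ k)) i) *
          Real.sin (∑ k, w k * (x k - y k))) * gaussDensity d σ y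
      = Real.exp (-(σ ^ 2) * (∑ i, w i ^ 2) / 2) *
          (∑ i, w i * (S⁻¹.mulVec
            (fun k => (x k - μ k) * Real.sin (∑ j, w j * x j)
              + σ ^ 2 * w k * Real.cos (∑ j, w j * x j))) i) :=
  linear_sin_conv_gaussian_general d w μ S σ hσ x
end

section
/- Let V : ℝᵐ → ℝ be convex and differentiable, H a Hilbert space, φ₁,…,φ_m ∈ H, λ > 0, and J(f) = V(⟨φ₁,f⟩,…,⟨φ_m,f⟩) + (λ/2)‖f‖². If f* minimizes J over H, then f* lies in the span of {φ₁,…,φ_m}; specifically f* = -(1/λ)Σᵢ (∂ᵢV)(Af*)·φᵢ where A f = (⟨φᵢ,f⟩)ᵢ. -/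
/-!
At a minimiser the Fréchet derivative of `J` vanishes. The derivative of the data term
`f ↦ V (A f)` is the functional `⟪∑ᵢ ∂ᵢV(A f*) • φᵢ, ·⟫` and that of `(λ/2)‖f‖²` is `⟪λ f*, ·⟫`,
so `∑ᵢ ∂ᵢV(A f*) • φᵢ + λ f*` is orthogonal to every vector, hence zero.
-/

section
variable {E : Type*} [NormedAddCommGroup E] [InnerProductSpace ℝ E]

theorem eq_neg_smul_of_isLocalMin_add_half_norm_sq {g : E → ℝ} {w x : E} {lam : ℝ}
    (hlam : lam ≠ 0) (hg : HasFDerivAt g (innerSL ℝ w) x)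
    (hmin : IsLocalMin (fun f => g f + lam / 2 * ‖f‖ ^ 2) x) :
    x = -(1 / lam) • w := by
  have hnorm : HasFDerivAt (fun f : E => ‖f‖ ^ 2) (2 • innerSL ℝ x) x := by
    simpa using (hasFDerivAt_id x).norm_sq
  have hzero : innerSL ℝ (w + lam • x) = 0 := by
    rw [map_add, map_smul]
    convert hmin.hasFDerivAt_eq_zero (hg.add (hnorm.const_smul (lam / 2))) using 2
    module
  have hsum : w + lam • x = 0 := by
    have := congr($hzero (w + lam • x))
    rwa [zero_apply, innerSL_apply_apply, inner_self_eq_zero] at this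
  rw [neg_smul, ← smul_neg, ← eq_neg_of_add_eq_zero_right hsum, one_div, inv_smul_smul₀ hlam]

theorem LinearMap.apply_inner_eq_inner_sum {ι : Type*} [Fintype ι] [DecidableEq ι]
    (D : (ι → ℝ) →ₗ[ℝ] ℝ) (φ : ι → E) (f : E) :
    D (fun i => inner ℝ (φ i) f) = inner ℝ (∑ i, D (Pi.single i 1) • φ i) f := by
  rw [D.pi_apply_eq_sum_univ, sum_inner]
  refine Finset.sum_congr rfl fun i _ => ?_
  rw [real_inner_smul_left, smul_eq_mul, mul_comm]
  congr 3
  ext j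
  simp [Pi.single_apply, eq_comm]

theorem hasFDerivAt_comp_inner {ι : Type*} [Fintype ι] [DecidableEq ι] {V : (ι → ℝ) → ℝ}
    (φ : ι → E) {f : E} (hV : DifferentiableAt ℝ V (fun i => inner ℝ (φ i) f)) :
    HasFDerivAt (fun g => V (fun i => inner ℝ (φ i) g))
      (innerSL ℝ (∑ i, fderiv ℝ V (fun i => inner ℝ (φ i) f) (Pi.single i 1) • φ i)) f := by
  let A : E →L[ℝ] (ι → ℝ) := ContinuousLinearMap.pi fun i => innerSL ℝ (φ i)
  refine (hV.hasFDerivAt.comp f A.hasFDerivAt).congr_fderiv ?_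
  ext g
  exact (fderiv ℝ V (A f)).toLinearMap.apply_inner_eq_inner_sum φ g

end

theorem minimizer_in_span_general {H : Type*} [NormedAddCommGroup H] [InnerProductSpace ℝ H]
    (m : ℕ) (V : (Fin m → ℝ) → ℝ)
    (hVdiff : Differentiable ℝ V)
    (φ : Fin m → H) (lam : ℝ) (hlam : 0 < lam)
    (J : H → ℝ)
    (hJ : J = fun f => V (fun i => (inner ℝ (φ i) f : ℝ)) + lam / 2 * ‖f‖ ^ 2)
    (fstar : H) (hmin : ∀ f, J fstar ≤ J f) :
    fstar = -(1 / lam) •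
      ∑ i, (fderiv ℝ V (fun i => (inner ℝ (φ i) fstar : ℝ)) (Pi.single i 1)) • φ i := by
  subst hJ
  exact eq_neg_smul_of_isLocalMin_add_half_norm_sq (g := fun f => V fun i => inner ℝ (φ i) f)
    hlam.ne' (hasFDerivAt_comp_inner φ (hVdiff _)) (Filter.Eventually.of_forall hmin)

/-- Representer-type theorem: the minimizer of
`J(f) = V(⟨φ₁,f⟩,…,⟨φ_m,f⟩) + (λ/2)‖f‖²` over a Hilbert space satisfies
`f* = -(1/λ)Σᵢ (∂ᵢV)(Af*)·φᵢ`, hence lies in the span of the `φᵢ`. -/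
theorem minimizer_in_span {H : Type*} [NormedAddCommGroup H] [InnerProductSpace ℝ H]
    [CompleteSpace H] (m : ℕ) (V : (Fin m → ℝ) → ℝ)
    (hVconv : ConvexOn ℝ Set.univ V) (hVdiff : Differentiable ℝ V)
    (φ : Fin m → H) (lam : ℝ) (hlam : 0 < lam)
    (J : H → ℝ)
    (hJ : J = fun f => V (fun i => (inner ℝ (φ i) f : ℝ)) + lam / 2 * ‖f‖ ^ 2)
    (fstar : H) (hmin : ∀ f, J fstar ≤ J f) :
    fstar = -(1 / lam) •
      ∑ i, (fderiv ℝ V (fun i => (inner ℝ (φ i) fstar : ℝ)) (Pi.single i 1)) • φ i :=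
  minimizer_in_span_general m V hVdiff φ lam hlam J hJ fstar hmin
end
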